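/- For every real s > 1, the Clausen function C_s(x) = ∑_{n=1}^{∞} cos(n x)/n^s is nonincreasing in x on the interval [0, π]: if 0 ≤ x₁ ≤ x₂ ≤ π then C_s(x₂) ≤ C_s(x₁). -/

import Mathlib

/-!
For `0 ≤ r < 1` one has `∑_{n ≥ 1} rⁿ cos (n x) = (r cos x - r²) / (1 - 2 r cos x + r²)`,
a nondecreasing function of `cos x`. Putting `r = e^{-t}` and taking the Mellin transform in `t`
turns this power series into `Γ(s) C_s(x)`, so `Γ(s) (C_s(x₁) - C_s(x₂))` is the integral over
`(0, ∞)` of `t^{s-1}` times a nonnegative function whenever `cos x₂ ≤ cos x₁`.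
-/

open Real Set MeasureTheory

lemma Real.hasSum_mellin {ι : Type*} [Countable ι] {a p : ι → ℝ} {F : ℝ → ℝ} {s : ℝ}
    (hp : ∀ i, a i = 0 ∨ 0 < p i) (hs : 0 < s)
    (hF : ∀ t ∈ Ioi 0, HasSum (fun i ↦ a i * rexp (-p i * t)) (F t))
    (h_sum : Summable fun i ↦ |a i| / p i ^ s) :
    HasSum (fun i ↦ Gamma s * a i / p i ^ s) (∫ t in Ioi 0, t ^ (s - 1) * F t) := by
  have hmellin : mellin (fun t ↦ (F t : ℂ)) s = ↑(∫ t in Ioi 0, t ^ (s - 1) * F t) := by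
    rw [mellin, ← integral_complex_ofReal]
    refine setIntegral_congr_fun measurableSet_Ioi fun t ht ↦ ?_
    rw [smul_eq_mul, Complex.ofReal_mul, Complex.ofReal_cpow (le_of_lt ht)]
    push_cast; rfl
  have hterm (i : ι) :
      Complex.Gamma s * a i / (p i : ℂ) ^ (s : ℂ) = ↑(Gamma s * a i / p i ^ s) := by
    rcases hp i with hai | hpi
    · simp [hai]
    · rw [Complex.ofReal_div, Complex.ofReal_mul, Complex.Gamma_ofReal,
        Complex.ofReal_cpow hpi.le]
  have := _root_.hasSum_mellin (a := fun i ↦ (a i : ℂ)) (F := fun t ↦ (F t : ℂ)) (s := s)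
    (by simpa using hp) (by simpa using hs)
    (fun t ht ↦ by exact_mod_cast (Complex.hasSum_ofReal.mpr (hF t ht)))
    (by simpa using h_sum)
  simp only [hterm, hmellin] at this
  exact_mod_cast this

/-- `∑_{n ≥ 1} rⁿ cos (n x)` in closed form, as a function of `r` and `c = cos x`. -/
noncomputable def cosGeomSum (r c : ℝ) : ℝ := (r * c - r ^ 2) / (1 - 2 * r * c + r ^ 2)

lemma hasSum_pow_mul_cos {r : ℝ} (hr : |r| < 1) (x : ℝ) :
    HasSum (fun n : ℕ ↦ r ^ (n + 1) * cos ((n + 1) * x)) (cosGeomSum r (cos x)) := by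
  set z : ℂ := r * Complex.exp (x * Complex.I)
  have hz : ‖z‖ < 1 := by simpa [z, Complex.norm_exp] using hr
  have hgeom : HasSum (fun n : ℕ ↦ z ^ (n + 1)) (z / (1 - z)) := by
    simpa [pow_succ', div_eq_mul_inv] using (hasSum_geometric_of_norm_lt_one hz).mul_left z
  have hpow (n : ℕ) : (z ^ (n + 1)).re = r ^ (n + 1) * cos ((n + 1) * x) := by
    have : z ^ (n + 1) =
        ((r ^ (n + 1) : ℝ) : ℂ) * Complex.exp (((n + 1) * x : ℝ) * Complex.I) := by
      rw [mul_pow, ← Complex.exp_nat_mul]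
      push_cast
      ring_nf
    rw [this, Complex.re_ofReal_mul, Complex.exp_ofReal_mul_I_re]
  have hre : z.re = r * cos x := by simp [z, Complex.exp_ofReal_mul_I_re]
  have him : z.im = r * sin x := by simp [z, Complex.exp_ofReal_mul_I_im]
  have hnormSq : Complex.normSq (1 - z) = 1 - 2 * r * cos x + r ^ 2 := by
    rw [Complex.normSq_apply, Complex.sub_re, Complex.sub_im, hre, him]
    simp only [Complex.one_re, Complex.one_im]
    linear_combination r ^ 2 * sin_sq_add_cos_sq x
  have hsum : (z / (1 - z)).re = cosGeomSum r (cos x) := by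
    rw [Complex.div_re, hnormSq, ← add_div, cosGeomSum]
    simp only [Complex.sub_re, Complex.sub_im, Complex.one_re, Complex.one_im, hre, him]
    congr 1
    linear_combination (-r ^ 2) * sin_sq_add_cos_sq x
  simpa only [hpow, hsum] using Complex.hasSum_re hgeom

lemma monotoneOn_cosGeomSum {r : ℝ} (h₀ : 0 ≤ r) (h₁ : r < 1) :
    MonotoneOn (cosGeomSum r) (Iic 1) := by
  have hden {c : ℝ} (hc : c ≤ 1) : 0 < 1 - 2 * r * c + r ^ 2 := by
    nlinarith [mul_nonneg h₀ (sub_nonneg.2 hc)]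
  intro c₂ hc₂ c₁ hc₁ hc
  rw [cosGeomSum, cosGeomSum, div_le_div_iff₀ (hden hc₂) (hden hc₁)]
  have hr : 0 ≤ 1 - r ^ 2 := by nlinarith
  nlinarith [mul_nonneg (mul_nonneg h₀ hr) (sub_nonneg.2 hc)]

lemma hasSum_cos_mul_exp {t : ℝ} (ht : 0 < t) (x : ℝ) :
    HasSum (fun n : ℕ ↦ cos ((n + 1) * x) * rexp (-(n + 1) * t))
      (cosGeomSum (rexp (-t)) (cos x)) := by
  have hr : |rexp (-t)| < 1 := by simpa [abs_of_pos (exp_pos _)] using ht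
  convert hasSum_pow_mul_cos hr x using 2 with n
  rw [← exp_nat_mul, mul_comm]
  push_cast
  ring_nf

lemma summable_cos_mul_div_rpow {s : ℝ} (hs : 1 < s) (x : ℝ) :
    Summable fun n : ℕ ↦ cos ((n + 1) * x) / ((n : ℝ) + 1) ^ s := by
  refine .of_norm_bounded (g := fun n : ℕ ↦ 1 / ((n : ℝ) + 1) ^ s) ?_ fun n ↦ ?_
  · exact_mod_cast (summable_nat_add_iff 1).2 (summable_one_div_nat_rpow.2 hs)
  · rw [Real.norm_eq_abs, abs_div, abs_of_pos (rpow_pos_of_pos n.cast_add_one_pos s)]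
    gcongr
    exact abs_cos_le_one _

theorem stmt_11 (s : ℝ) (hs : 1 < s) (x₁ x₂ : ℝ) (h₁ : 0 ≤ x₁) (h₁₂ : x₁ ≤ x₂)
    (h₂ : x₂ ≤ Real.pi) :
    (∑' n : ℕ, Real.cos ((n + 1) * x₂) / ((n : ℝ) + 1) ^ s) ≤
      ∑' n : ℕ, Real.cos ((n + 1) * x₁) / ((n : ℝ) + 1) ^ s := by
  have hs₀ : 0 < s := zero_lt_one.trans hs
  have hsum₁ := summable_cos_mul_div_rpow hs x₁
  have hsum₂ := summable_cos_mul_div_rpow hs x₂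
  -- Comparing the two series through their difference spares us any integrability argument.
  have hmellin := Real.hasSum_mellin (ι := ℕ) (p := fun n ↦ (n : ℝ) + 1)
    (a := fun n ↦ cos ((n + 1) * x₁) - cos ((n + 1) * x₂))
    (fun n ↦ Or.inr n.cast_add_one_pos) hs₀
    (fun t ht ↦ ((hasSum_cos_mul_exp ht x₁).sub (hasSum_cos_mul_exp ht x₂)).congr_fun
      fun n ↦ by ring)
    ((hsum₁.sub hsum₂).abs.congr fun n ↦ by
      rw [← sub_div, abs_div, abs_of_pos (rpow_pos_of_pos n.cast_add_one_pos s)])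
  have hintegral_nonneg :=
    setIntegral_nonneg (μ := volume) measurableSet_Ioi fun t (ht : 0 < t) ↦
      mul_nonneg (rpow_nonneg ht.le (s - 1)) <| sub_nonneg.2 <|
        monotoneOn_cosGeomSum (exp_pos (-t)).le (exp_lt_one_iff.2 (neg_lt_zero.2 ht))
          (cos_le_one x₂) (cos_le_one x₁) (cos_le_cos_of_nonneg_of_le_pi h₁ h₂ h₁₂)
  have hdiff : HasSum (fun n : ℕ ↦ Gamma s * (cos ((n + 1) * x₁) - cos ((n + 1) * x₂)) /
      ((n : ℝ) + 1) ^ s) (Gamma s * (∑' n : ℕ, cos ((n + 1) * x₁) / ((n : ℝ) + 1) ^ s -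
        ∑' n : ℕ, cos ((n + 1) * x₂) / ((n : ℝ) + 1) ^ s)) :=
    ((hsum₁.hasSum.sub hsum₂.hasSum).mul_left _).congr_fun fun n ↦ by ring
  have hnonneg := hdiff.unique hmellin ▸ hintegral_nonneg
  exact sub_nonneg.1 (nonneg_of_mul_nonneg_right hnonneg (Gamma_pos_of_pos hs₀))
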